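/- Let P : ℝ → ℝ be continuous, positive and antitone (nonincreasing) on (0,∞). Let M > 0 and let D be a Borel probability measure on ℝ supported in [-M, M] whose mean μ = ∫ η dD(η) is strictly negative. Let c > M, γ ∈ ℝ and p̂ ∈ ℝ. If −μ · P(c) > γ − μ · p̂, then the expected deviation gain −γ + ∫ ( η·p̂ + ∫_{c+η}^{c} P(a) da ) dD(η) is strictly positive. (This is the key step showing a noisy CFMM with negative-mean noise trades is not truthful: choosing a state c with P(c) large enough makes deviation profitable.) -/

import Mathlib

/-!
On the support `|η| ≤ M < c` the antitone price curve gives `∫_{c+η}^{c} P ≥ -η · P(c)` whatever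
the sign of `η`, so the integrand is at least `η · (p̂ - P(c))`. Integrating, the expected gain is at
least `μ · (p̂ - P(c)) - γ`, which is positive by the hypothesis on `c`.
-/

open MeasureTheory intervalIntegral Set

theorem AntitoneOn.sub_mul_le_intervalIntegral {f : ℝ → ℝ} {a b : ℝ}
    (hf : AntitoneOn f (uIcc a b)) : (b - a) * f b ≤ ∫ x in a..b, f x := by
  rcases le_total a b with hab | hba
  · have hle : ∫ _ in a..b, f b ≤ ∫ x in a..b, f x :=
      integral_mono_on hab intervalIntegrable_const hf.intervalIntegrable fun x hx =>
        hf (Icc_subset_uIcc hx) (Icc_subset_uIcc (right_mem_Icc.2 hab)) hx.2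
    simpa using hle
  · have hle : ∫ x in b..a, f x ≤ ∫ _ in b..a, f b :=
      integral_mono_on hba (hf.intervalIntegrable.symm) intervalIntegrable_const fun x hx =>
        hf (Icc_subset_uIcc' (left_mem_Icc.2 hba)) (Icc_subset_uIcc' hx) hx.1
    rw [integral_symm]
    simp only [intervalIntegral.integral_const, smul_eq_mul] at hle
    linarith

theorem intervalIntegral.continuousOn_integral_left {f : ℝ → ℝ} {a b₁ b₂ : ℝ}
    (hf : IntervalIntegrable f volume b₁ b₂) (ha : a ∈ uIcc b₁ b₂) :
    ContinuousOn (fun x => ∫ t in x..a, f t) (uIcc b₁ b₂) := by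
  simp only [integral_symm a]
  exact (continuousOn_primitive_interval' hf ha).neg

theorem MeasureTheory.integrable_of_continuousOn_of_ae_mem {X E : Type*} [TopologicalSpace X]
    [T2Space X] [MeasurableSpace X] [OpensMeasurableSpace X] [NormedAddCommGroup E]
    {μ : Measure X} [IsFiniteMeasure μ] {K : Set X} {f : X → E}
    (hK : IsCompact K) (hμK : ∀ᵐ x ∂μ, x ∈ K) (hf : ContinuousOn f K) : Integrable f μ := by
  rw [← Measure.restrict_eq_self_of_ae_mem hμK]
  exact hf.integrableOn_compact hK

theorem negative_mean_noise_not_truthful_general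
    (P : ℝ → ℝ)
    (hPcont : ContinuousOn P (Set.Ioi 0))
    (hPanti : AntitoneOn P (Set.Ioi 0))
    (M : ℝ) (hM : 0 < M)
    (D : Measure ℝ) [IsProbabilityMeasure D]
    (hsupp : ∀ᵐ η ∂D, η ∈ Set.Icc (-M) M)
    (μ : ℝ) (hμ : μ = ∫ η, η ∂D)
    (c γ phat : ℝ) (hc : M < c)
    (hcond : γ - μ * phat < -μ * P c) :
    0 < -γ + ∫ η, (η * phat + ∫ a in (c + η)..c, P a) ∂D := by
  have hwindow : uIcc (c - M) (c + M) ⊆ Ioi 0 := fun x hx => by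
    rw [uIcc_of_le (by linarith)] at hx
    exact lt_of_lt_of_le (by linarith) hx.1
  have hshift : MapsTo (c + ·) (Icc (-M) M) (uIcc (c - M) (c + M)) := fun η hη => by
    rw [uIcc_of_le (by linarith)]
    exact ⟨by linarith [hη.1], by linarith [hη.2]⟩
  have hc_mem : c ∈ uIcc (c - M) (c + M) := by simpa using hshift ⟨by linarith, hM.le⟩
  have hintegral : ContinuousOn (fun η => ∫ a in (c + η)..c, P a) (Icc (-M) M) :=
    (continuousOn_integral_left ((hPcont.mono hwindow).intervalIntegrable) hc_mem).comp
      (continuous_const.add continuous_id).continuousOn hshift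
  have hlower : ∀ᵐ η ∂D, η * (phat - P c) ≤ η * phat + ∫ a in (c + η)..c, P a := by
    filter_upwards [hsupp] with η hη
    have hsub : uIcc (c + η) c ⊆ Ioi 0 := (uIcc_subset_uIcc (hshift hη) hc_mem).trans hwindow
    have := (hPanti.mono hsub).sub_mul_le_intervalIntegral
    linarith
  have hmono : ∫ η, η * (phat - P c) ∂D ≤ ∫ η, (η * phat + ∫ a in (c + η)..c, P a) ∂D :=
    integral_mono_ae
      ((integrable_of_continuousOn_of_ae_mem isCompact_Icc hsupp continuousOn_id).mul_const _)
      (integrable_of_continuousOn_of_ae_mem isCompact_Icc hsupp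
        ((continuousOn_id.mul continuousOn_const).add hintegral)) hlower
  rw [MeasureTheory.integral_mul_const, ← hμ] at hmono
  linarith

/-- Key step showing a noisy CFMM with negative-mean noise trades is not truthful:
if the reserve level `c` is chosen so that `-μ · P(c) > γ - μ · p̂`, then the
expected deviation gain is strictly positive. -/
theorem negative_mean_noise_not_truthful
    (P : ℝ → ℝ)
    (hPcont : ContinuousOn P (Set.Ioi 0))
    (hPpos : ∀ x ∈ Set.Ioi (0 : ℝ), 0 < P x)
    (hPanti : AntitoneOn P (Set.Ioi 0))
    (M : ℝ) (hM : 0 < M)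
    (D : Measure ℝ) [IsProbabilityMeasure D]
    (hsupp : ∀ᵐ η ∂D, η ∈ Set.Icc (-M) M)
    (μ : ℝ) (hμ : μ = ∫ η, η ∂D) (hμneg : μ < 0)
    (c γ phat : ℝ) (hc : M < c)
    (hcond : γ - μ * phat < -μ * P c) :
    0 < -γ + ∫ η, (η * phat + ∫ a in (c + η)..c, P a) ∂D :=
  negative_mean_noise_not_truthful_general P hPcont hPanti M hM D hsupp μ hμ c γ phat hc hcond
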